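/- arXiv:2406.11120 — 2 statements merged into one kernel-verified Lean document; each statement's English description precedes it below -/
import Mathlib

section
/- The function f̂(x) := cosh(1/x − 1) = cosh(1)·cosh(1/x) − sinh(1)·sinh(1/x) satisfies: (i) deriv f̂ 1 = 0 (the Neumann condition at the boundary point x = 1); (ii) x²·(d/dx)(x²·f̂′(x)) = f̂(x) for all x ≥ 1; (iii) ∫_{[1,∞)} f̂(x)² · x⁻² dx < ∞, so that f̂ and Δf̂ = f̂ belong to L²([1,∞), x⁻² dx); and (iv) f̂(x) ≥ 1 for all x ≥ 1, so f̂ is not zero almost everywhere on [1,∞). -/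
open MeasureTheory Set Filter

lemma hd_inner {x : ℝ} (hx : x ≠ 0) :
    HasDerivAt (fun z : ℝ => 1/z - 1) (-(x^2)⁻¹) x := by
  simpa [one_div] using (hasDerivAt_inv hx).sub_const 1

lemma hd1 {x : ℝ} (hx : x ≠ 0) :
    HasDerivAt (fun z : ℝ => Real.cosh (1/z - 1))
      (-Real.sinh (1/x - 1) * (x^2)⁻¹) x := by
  have := (Real.hasDerivAt_cosh (1/x - 1)).comp x (hd_inner hx)
  simpa [mul_neg, neg_mul, Function.comp_def] using this

lemma hd2 {x : ℝ} (hx : x ≠ 0) :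
    HasDerivAt (fun y : ℝ => -Real.sinh (1/y - 1))
      (Real.cosh (1/x - 1) * (x^2)⁻¹) x := by
  have := ((Real.hasDerivAt_sinh (1/x - 1)).comp x (hd_inner hx)).neg
  simpa [mul_neg, neg_mul, Function.comp_def, Pi.neg_def] using this

/-- Properties of `f̂(x) = cosh(1/x − 1) = cosh(1) cosh(1/x) − sinh(1) sinh(1/x)`:
(i) Neumann condition `f̂′(1) = 0`; (ii) `Δf̂ = f̂` on `[1,∞)` for the
Laplace–Beltrami operator `Δf(x) = x² (x² f′(x))′` of `g(x) = x⁻⁴`;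
(iii) `∫_{[1,∞)} f̂² x⁻² dx < ∞`, so `f̂, Δf̂ ∈ L²([1,∞), x⁻² dx)`;
(iv) `f̂ ≥ 1` on `[1,∞)`, so `f̂` is not a.e. zero. -/
theorem hatf_properties :
    (∀ x : ℝ, Real.cosh (1/x - 1)
        = Real.cosh 1 * Real.cosh (1/x) - Real.sinh 1 * Real.sinh (1/x)) ∧
    deriv (fun x : ℝ => Real.cosh (1/x - 1)) 1 = 0 ∧
    (∀ x : ℝ, 1 ≤ x →
      x ^ 2 * deriv (fun y : ℝ =>
          y ^ 2 * deriv (fun z : ℝ => Real.cosh (1/z - 1)) y) x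
        = Real.cosh (1/x - 1)) ∧
    IntegrableOn (fun x : ℝ => (Real.cosh (1/x - 1)) ^ 2 * (x ^ 2)⁻¹)
      (Set.Ici 1) volume ∧
    (∀ x : ℝ, 1 ≤ x → 1 ≤ Real.cosh (1/x - 1)) := by
  refine ⟨?_, ?_, ?_, ?_, ?_⟩
  · intro x
    rw [Real.cosh_sub, mul_comm (Real.cosh (1/x)), mul_comm (Real.sinh (1/x))]
  · have := (hd1 (one_ne_zero (α := ℝ))).deriv
    simpa using this
  · intro x hx
    have hx0 : x ≠ 0 := by positivity
    have heq : (fun y : ℝ => y ^ 2 * deriv (fun z : ℝ => Real.cosh (1/z - 1)) y)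
        =ᶠ[nhds x] (fun y : ℝ => -Real.sinh (1/y - 1)) := by
      filter_upwards [eventually_ne_nhds hx0] with y hy
      rw [(hd1 hy).deriv]
      field_simp
    rw [heq.deriv_eq, (hd2 hx0).deriv]
    field_simp
  · have hmeas : AEStronglyMeasurable
        (fun x : ℝ => (Real.cosh (1/x - 1)) ^ 2 * (x ^ 2)⁻¹)
        (volume.restrict (Set.Ici (1:ℝ))) := by
      refine Measurable.aestronglyMeasurable ?_
      fun_prop
    have hint : IntegrableOn (fun x : ℝ => Real.cosh 1 ^ 2 * (x ^ 2)⁻¹)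
        (Set.Ici 1) volume := by
      rw [integrableOn_Ici_iff_integrableOn_Ioi]
      have h := (integrableOn_Ioi_rpow_of_lt (by norm_num : (-2:ℝ) < -1)
        (by norm_num : (0:ℝ) < 1)).const_mul (Real.cosh 1 ^ 2)
      refine IntegrableOn.congr_fun h (fun y hy => ?_) measurableSet_Ioi
      have hy0 : (0:ℝ) < y := lt_trans one_pos hy
      rw [Real.rpow_neg hy0.le, ← Real.rpow_natCast y 2]
      norm_num
    refine hint.mono' hmeas ?_
    rw [ae_restrict_iff' measurableSet_Ici]
    filter_upwards with x hx
    have hx0 : (0:ℝ) < x := lt_of_lt_of_le one_pos hx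
    have h1 : |1/x - 1| ≤ |1| := by
      have hle : 1/x ≤ 1 := by rw [div_le_one hx0]; exact hx
      have hpos : 0 < 1/x := by positivity
      rw [abs_le]; simp only [abs_one]
      constructor <;> linarith
    have h2 : Real.cosh (1/x - 1) ≤ Real.cosh 1 := Real.cosh_le_cosh.2 h1
    have h3 : (0:ℝ) ≤ Real.cosh (1/x - 1) := (Real.cosh_pos _).le
    rw [Real.norm_eq_abs, abs_of_nonneg (by positivity)]
    have : Real.cosh (1/x - 1) ^ 2 ≤ Real.cosh 1 ^ 2 := by nlinarith
    have hpos : (0:ℝ) ≤ (x^2)⁻¹ := by positivity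
    nlinarith
  · intro x _
    exact Real.one_le_cosh _
end

section
/- (Failure of essential self-adjointness of the Neumann Laplacian without completeness.) There exists a function f ∈ L²([1,∞), x⁻² dx) which is not zero almost everywhere and such that for every infinitely differentiable h : ℝ → ℝ with compact support and deriv h 1 = 0 one has ∫_{[1,∞)} ( −x²·(d/dx)(x²·h′(x)) + h(x) ) · f(x) · x⁻² dx = 0. Consequently, the set { ( −x²·(x²·h′)′ + h ) restricted to [1,∞) : h infinitely differentiable with compact support and deriv h 1 = 0 } is not dense in L²([1,∞), x⁻² dx), so the operator H₀ = −Δ with domain the Neumann test functions is not essentially self-adjoint in L²([1,∞), x⁻² dx). -/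
open MeasureTheory Set Filter
open scoped ENNReal NNReal ContDiff

/-- The Riemannian volume measure `μ = x⁻² dx` on `[1,∞)` of the metric
`g(x) = x⁻⁴`. -/
noncomputable def volMeasure : Measure ℝ :=
  (volume.restrict (Set.Ici (1:ℝ))).withDensity (fun x => ENNReal.ofReal ((x ^ 2)⁻¹))

namespace NeumannAux

/-- The obstruction function `f(x) = cosh(1 - 1/x)`. -/
noncomputable def fct (x : ℝ) : ℝ := Real.cosh (1 - x⁻¹)

lemma fct_meas : Measurable fct :=
  Real.continuous_cosh.measurable.comp (measurable_const.sub measurable_inv)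

lemma weight_int : IntegrableOn (fun x : ℝ => (x ^ 2)⁻¹) (Set.Ici (1:ℝ)) := by
  rw [integrableOn_Ici_iff_integrableOn_Ioi]
  have h := integrableOn_Ioi_rpow_of_lt (show (-2:ℝ) < -1 by norm_num) one_pos
  refine h.congr_fun (fun x hx => ?_) measurableSet_Ioi
  have hx0 : (0:ℝ) < x := lt_trans one_pos hx
  dsimp only
  rw [show (-2:ℝ) = -((2:ℕ):ℝ) by norm_num, Real.rpow_neg hx0.le, Real.rpow_natCast]

instance : IsFiniteMeasure volMeasure := by
  constructor
  rw [volMeasure, withDensity_apply _ MeasurableSet.univ, Measure.restrict_univ]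
  exact weight_int.lintegral_lt_top

lemma ae_mem : ∀ᵐ x ∂volMeasure, x ∈ Set.Ici (1:ℝ) :=
  (withDensity_absolutelyContinuous _ _).ae_le (ae_restrict_mem measurableSet_Ici)

lemma fct_mem : MemLp fct 2 volMeasure := by
  refine MemLp.of_bound fct_meas.aestronglyMeasurable (Real.cosh 1) ?_
  filter_upwards [ae_mem] with x hx
  have hx0 : (0:ℝ) < x := lt_of_lt_of_le one_pos hx
  have h1 : x⁻¹ ≤ 1 := by
    rw [inv_le_one₀ hx0]; exact hx
  have h2 : (0:ℝ) ≤ x⁻¹ := inv_nonneg.2 hx0.le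
  have habs : |1 - x⁻¹| ≤ |(1:ℝ)| := by
    rw [abs_one]; rw [abs_le]; constructor <;> nlinarith
  have : Real.cosh (1 - x⁻¹) ≤ Real.cosh 1 := Real.cosh_le_cosh.2 habs
  rw [Real.norm_eq_abs, fct, abs_of_pos (Real.cosh_pos _)]
  exact this

lemma vol_ne_zero : volMeasure (Set.Icc 1 2) ≠ 0 := by
  have h1 : volMeasure (Set.Icc 1 2) =
      ∫⁻ x in Set.Icc (1:ℝ) 2, ENNReal.ofReal ((x ^ 2)⁻¹) ∂volume := by
    rw [volMeasure, withDensity_apply _ measurableSet_Icc,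
      Measure.restrict_restrict measurableSet_Icc,
      Set.inter_eq_self_of_subset_left (Set.Icc_subset_Ici_self)]
  have h2 : ENNReal.ofReal (1/4) * volume (Set.Icc (1:ℝ) 2) ≤
      ∫⁻ x in Set.Icc (1:ℝ) 2, ENNReal.ofReal ((x ^ 2)⁻¹) ∂volume := by
    rw [← setLIntegral_const]
    refine setLIntegral_mono (by fun_prop) (fun x hx => ?_)
    refine ENNReal.ofReal_le_ofReal ?_
    rw [one_div]
    refine inv_anti₀ (by nlinarith [hx.1]) (by nlinarith [hx.1, hx.2])
  rw [h1]
  intro h0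
  rw [h0] at h2
  simp [Real.volume_Icc] at h2

lemma fct_ne : ¬ (fct =ᵐ[volMeasure] (0 : ℝ → ℝ)) := by
  intro hc
  have hpos : ∀ x, fct x ≠ 0 := fun x => ne_of_gt (Real.cosh_pos _)
  have : ∀ᵐ x ∂volMeasure, False := by
    filter_upwards [hc] with x hx
    exact hpos x hx
  rw [ae_iff] at this
  simp at this
  exact vol_ne_zero (le_antisymm (this ▸ measure_mono (Set.subset_univ _)) (zero_le))

/-- The key pointwise derivative identity. -/
lemma key_deriv (h : ℝ → ℝ) (hC : ContDiff ℝ (⊤ : ℕ∞) h) {x : ℝ} (hx : x ≠ 0) :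
    HasDerivAt (fun y => h y * Real.sinh (1 - y⁻¹)
        - y ^ 2 * deriv h y * Real.cosh (1 - y⁻¹))
      ((-(x ^ 2 * deriv (fun y : ℝ => y ^ 2 * deriv h y) x) + h x)
          * Real.cosh (1 - x⁻¹) * (x ^ 2)⁻¹) x := by
  have hC' : ContDiff ℝ ∞ h := hC.of_le (by simp)
  have hder : ContDiff ℝ ∞ (deriv h) := (contDiff_infty_iff_deriv.mp hC').2
  have hG : ContDiff ℝ ∞ (fun y : ℝ => y ^ 2 * deriv h y) :=
    (contDiff_id.pow 2).mul hder
  have hu : HasDerivAt (fun y : ℝ => 1 - y⁻¹) ((x ^ 2)⁻¹) x := by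
    simpa using (hasDerivAt_inv hx).const_sub 1
  have hs : HasDerivAt (fun y => Real.sinh (1 - y⁻¹))
      (Real.cosh (1 - x⁻¹) * (x ^ 2)⁻¹) x := hu.sinh
  have hc : HasDerivAt (fun y => Real.cosh (1 - y⁻¹))
      (Real.sinh (1 - x⁻¹) * (x ^ 2)⁻¹) x := hu.cosh
  have hh : HasDerivAt h (deriv h x) x := (hC.differentiable (by simp) x).hasDerivAt
  have hGd : HasDerivAt (fun y : ℝ => y ^ 2 * deriv h y)
      (deriv (fun y : ℝ => y ^ 2 * deriv h y) x) x :=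
    ((hG.differentiable (by simp)) x).hasDerivAt
  have H := (hh.mul hs).sub (hGd.mul hc)
  refine H.congr_deriv ?_
  have hx2 : (x:ℝ) ^ 2 ≠ 0 := pow_ne_zero 2 hx
  have he : x ^ 2 * (x ^ 2)⁻¹ = (1:ℝ) := mul_inv_cancel₀ hx2
  linear_combination ((deriv (fun y : ℝ => y ^ 2 * deriv h y) x * Real.cosh (1 - x⁻¹)
    - deriv h x * Real.sinh (1 - x⁻¹) : ℝ)) * he

/-- The key integral identity: `(-Δ+1)h ⟂ f` for Neumann test functions. -/
lemma key_integral (h : ℝ → ℝ) (hC : ContDiff ℝ (⊤ : ℕ∞) h) (hsupp : HasCompactSupport h)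
    (hder1 : deriv h 1 = 0) :
    ∫ x in Set.Ici (1:ℝ),
        (-(x ^ 2 * deriv (fun y : ℝ => y ^ 2 * deriv h y) x) + h x)
          * fct x * (x ^ 2)⁻¹ = 0 := by
  have hC' : ContDiff ℝ ∞ h := hC.of_le (by simp)
  have hder : ContDiff ℝ ∞ (deriv h) := (contDiff_infty_iff_deriv.mp hC').2
  have hG : ContDiff ℝ ∞ (fun y : ℝ => y ^ 2 * deriv h y) :=
    (contDiff_id.pow 2).mul hder
  have hD : Continuous (deriv (fun y : ℝ => y ^ 2 * deriv h y)) :=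
    ((contDiff_infty_iff_deriv.mp hG).2).continuous
  have hdsupp : HasCompactSupport (deriv h) := hsupp.deriv
  have hGsupp : HasCompactSupport (fun y : ℝ => y ^ 2 * deriv h y) := hdsupp.mul_left
  have hDsupp : HasCompactSupport (deriv (fun y : ℝ => y ^ 2 * deriv h y)) := hGsupp.deriv
  -- a bound R beyond which everything vanishes
  set K : Set ℝ := tsupport h ∪ (tsupport (deriv h) ∪
    tsupport (deriv (fun y : ℝ => y ^ 2 * deriv h y))) with hK
  have hKc : IsCompact K := (hsupp.union (hdsupp.union hDsupp))
  obtain ⟨r, hr⟩ := (Metric.isBounded_iff_subset_closedBall 0).mp hKc.isBounded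
  set R : ℝ := max (r + 1) 2 with hR
  have hR1 : (1:ℝ) < R := lt_of_lt_of_le one_lt_two (le_max_right _ _)
  have hRK : ∀ x : ℝ, R ≤ x → x ∉ K := by
    intro x hxR hxK
    have := hr hxK
    rw [Metric.mem_closedBall, Real.dist_eq, sub_zero] at this
    have h1 : r + 1 ≤ x := le_trans (le_max_left _ _) hxR
    have h2 : (0:ℝ) < x := lt_of_lt_of_le (lt_of_lt_of_le one_pos hR1.le) hxR
    rw [abs_of_pos h2] at this
    linarith
  have hvan : ∀ x : ℝ, R ≤ x → h x = 0 ∧ deriv h x = 0 ∧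
      deriv (fun y : ℝ => y ^ 2 * deriv h y) x = 0 := by
    intro x hxR
    have hxK := hRK x hxR
    rw [hK] at hxK
    simp only [Set.mem_union, not_or] at hxK
    exact ⟨image_eq_zero_of_notMem_tsupport hxK.1,
      image_eq_zero_of_notMem_tsupport hxK.2.1,
      image_eq_zero_of_notMem_tsupport hxK.2.2⟩
  set φ : ℝ → ℝ := fun x =>
    (-(x ^ 2 * deriv (fun y : ℝ => y ^ 2 * deriv h y) x) + h x)
      * fct x * (x ^ 2)⁻¹ with hφ
  -- continuity of φ away from 0
  have hφcont : ContinuousOn φ (Set.Icc 1 R) := by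
    have h1 : ContinuousOn (fun x : ℝ => (x ^ 2)⁻¹) (Set.Icc 1 R) := by
      refine ContinuousOn.inv₀ (continuous_pow 2).continuousOn (fun x hx => ?_)
      have : (0:ℝ) < x := lt_of_lt_of_le one_pos hx.1
      positivity
    have h2 : ContinuousOn fct (Set.Icc 1 R) := by
      refine Real.continuous_cosh.comp_continuousOn ?_
      refine continuousOn_const.sub ?_
      refine ContinuousOn.inv₀ continuousOn_id (fun x hx => ?_)
      exact ne_of_gt (lt_of_lt_of_le one_pos hx.1)
    exact ((((continuous_pow 2).mul hD).neg.add hC.continuous).continuousOn.mul h2).mul h1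
  -- the antiderivative
  set F : ℝ → ℝ := fun y => h y * Real.sinh (1 - y⁻¹)
      - y ^ 2 * deriv h y * Real.cosh (1 - y⁻¹) with hF
  have hderivF : ∀ x ∈ Set.uIcc (1:ℝ) R, HasDerivAt F (φ x) x := by
    intro x hx
    rw [Set.uIcc_of_le hR1.le] at hx
    have hx0 : x ≠ 0 := ne_of_gt (lt_of_lt_of_le one_pos hx.1)
    exact key_deriv h hC hx0
  have hII : IntervalIntegrable φ volume 1 R := by
    apply ContinuousOn.intervalIntegrable
    rwa [Set.uIcc_of_le hR1.le]
  have keyIoc : ∫ x in Set.Ioc (1:ℝ) R, φ x = 0 := by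
    rw [← intervalIntegral.integral_of_le hR1.le,
      intervalIntegral.integral_eq_sub_of_hasDerivAt hderivF hII]
    have hFR : F R = 0 := by
      obtain ⟨h1, h2, -⟩ := hvan R le_rfl
      simp [hF, h1, h2]
    have hF1 : F 1 = 0 := by
      simp [hF, hder1, Real.sinh_zero]
    rw [hFR, hF1, sub_zero]
  have keyIoi : ∫ x in Set.Ioi R, φ x = 0 := by
    refine setIntegral_eq_zero_of_forall_eq_zero (fun x hx => ?_)
    obtain ⟨h1, -, h3⟩ := hvan x (le_of_lt hx)
    simp [hφ, h1, h3]
  have hInt1 : IntegrableOn φ (Set.Ioc 1 R) volume := hII.1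
  have hInt2 : IntegrableOn φ (Set.Ioi R) volume := by
    refine (integrableOn_zero).congr_fun (fun x hx => ?_) measurableSet_Ioi
    obtain ⟨h1, -, h3⟩ := hvan x (le_of_lt hx)
    simp [hφ, h1, h3]
  calc ∫ x in Set.Ici (1:ℝ), φ x = ∫ x in Set.Ioi (1:ℝ), φ x :=
        integral_Ici_eq_integral_Ioi
    _ = ∫ x in Set.Ioc 1 R ∪ Set.Ioi R, φ x := by
        rw [Set.Ioc_union_Ioi_eq_Ioi hR1.le]
    _ = (∫ x in Set.Ioc 1 R, φ x) + ∫ x in Set.Ioi R, φ x :=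
        setIntegral_union (Set.Ioc_disjoint_Ioi le_rfl) measurableSet_Ioi hInt1 hInt2
    _ = 0 := by rw [keyIoc, keyIoi, add_zero]

/-- Integrals against `volMeasure` are weighted Lebesgue integrals. -/
lemma integral_volMeasure (g : ℝ → ℝ) :
    ∫ x, g x ∂volMeasure = ∫ x in Set.Ici (1:ℝ), g x * (x ^ 2)⁻¹ := by
  have mw : Measurable fun x : ℝ => ((x ^ 2)⁻¹).toNNReal := by fun_prop
  rw [show volMeasure = (volume.restrict (Set.Ici (1:ℝ))).withDensity
        (fun x => (((x ^ 2)⁻¹).toNNReal : ℝ≥0∞)) from rfl,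
      integral_withDensity_eq_integral_smul mw]
  refine integral_congr_ae (ae_of_all _ fun x => ?_)
  simp only [NNReal.smul_def, smul_eq_mul]
  rw [Real.coe_toNNReal _ (inv_nonneg.2 (sq_nonneg x))]
  ring

end NeumannAux

/-- Failure of essential self-adjointness of the Neumann Laplacian without
completeness: there is `f ∈ L²([1,∞), x⁻² dx)`, not a.e. zero, orthogonal to
`(−Δ + 1) h` for every Neumann test function `h` (smooth, compactly supported,
`h′(1) = 0`), where `Δh(x) = x² (x² h′(x))′`.  Consequently the range of
`−Δ + 1` on Neumann test functions is not dense in `L²([1,∞), x⁻² dx)`: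
some `f ∈ L²` stays at `L²`-distance at least `ε > 0` from the whole range,
so `H₀ = −Δ` with domain the Neumann test functions is not essentially
self-adjoint. -/
theorem neumann_laplacian_not_essentially_selfadjoint :
    (∃ f : ℝ → ℝ, MemLp f 2 volMeasure ∧ ¬ (f =ᵐ[volMeasure] 0) ∧
      ∀ h : ℝ → ℝ, ContDiff ℝ (⊤ : ℕ∞) h → HasCompactSupport h → deriv h 1 = 0 →
        ∫ x in Set.Ici (1:ℝ),
          (-(x ^ 2 * deriv (fun y : ℝ => y ^ 2 * deriv h y) x) + h x)
            * f x * (x ^ 2)⁻¹ = 0) ∧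
    (∃ f : ℝ → ℝ, MemLp f 2 volMeasure ∧ ∃ ε : ℝ, 0 < ε ∧
      ∀ h : ℝ → ℝ, ContDiff ℝ (⊤ : ℕ∞) h → HasCompactSupport h → deriv h 1 = 0 →
        ENNReal.ofReal ε ≤ eLpNorm
          (fun x : ℝ =>
            ((-(x ^ 2 * deriv (fun y : ℝ => y ^ 2 * deriv h y) x) + h x) - f x))
          2 volMeasure) := by
  constructor
  · exact ⟨NeumannAux.fct, NeumannAux.fct_mem, NeumannAux.fct_ne,
      fun h hC hs hd => NeumannAux.key_integral h hC hs hd⟩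
  · set fL : Lp ℝ 2 volMeasure := NeumannAux.fct_mem.toLp NeumannAux.fct with hfL
    have hfLne : fL ≠ 0 := by
      intro h0
      refine NeumannAux.fct_ne ?_
      have h1 : (⇑fL : ℝ → ℝ) =ᵐ[volMeasure] NeumannAux.fct :=
        MemLp.coeFn_toLp NeumannAux.fct_mem
      have h2 : (⇑fL : ℝ → ℝ) =ᵐ[volMeasure] 0 := by
        rw [h0]; exact Lp.coeFn_zero _ _ _
      exact h1.symm.trans h2
    have hfLpos : 0 < ‖fL‖ := by
      rw [norm_pos_iff]; exact hfLne
    refine ⟨NeumannAux.fct, NeumannAux.fct_mem, ‖fL‖, hfLpos, ?_⟩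
    intro h hC hsupp hder1
    -- MemLp of Th := (-Δ+1)h
    have hC' : ContDiff ℝ ∞ h := hC.of_le (by simp)
    have hder : ContDiff ℝ ∞ (deriv h) := (contDiff_infty_iff_deriv.mp hC').2
    have hG : ContDiff ℝ ∞ (fun y : ℝ => y ^ 2 * deriv h y) :=
      (contDiff_id.pow 2).mul hder
    have hD : Continuous (deriv (fun y : ℝ => y ^ 2 * deriv h y)) :=
      ((contDiff_infty_iff_deriv.mp hG).2).continuous
    have hThc : Continuous (fun x : ℝ =>
        -(x ^ 2 * deriv (fun y : ℝ => y ^ 2 * deriv h y) x) + h x) :=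
      ((continuous_pow 2).mul hD).neg.add hC.continuous
    have hThsupp : HasCompactSupport (fun x : ℝ =>
        -(x ^ 2 * deriv (fun y : ℝ => y ^ 2 * deriv h y) x) + h x) := by
      have h1 : HasCompactSupport (deriv (fun y : ℝ => y ^ 2 * deriv h y)) :=
        (hsupp.deriv.mul_left).deriv
      exact HasCompactSupport.add (HasCompactSupport.neg (HasCompactSupport.mul_left h1)) hsupp
    obtain ⟨C, hCb⟩ := hThc.bounded_above_of_compact_support hThsupp
    have hThmem : MemLp (fun x : ℝ =>
        -(x ^ 2 * deriv (fun y : ℝ => y ^ 2 * deriv h y) x) + h x) 2 volMeasure :=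
      MemLp.of_bound hThc.aestronglyMeasurable C (ae_of_all _ hCb)
    set gL : Lp ℝ 2 volMeasure := hThmem.toLp _ with hgL
    -- orthogonality
    have hortho : inner ℝ gL fL = 0 := by
      rw [MeasureTheory.L2.inner_def]
      have h1 : ∫ a, inner ℝ (gL a) (fL a) ∂volMeasure =
          ∫ a, (-(a ^ 2 * deriv (fun y : ℝ => y ^ 2 * deriv h y) a) + h a)
            * NeumannAux.fct a ∂volMeasure := by
        refine integral_congr_ae ?_
        filter_upwards [MemLp.coeFn_toLp hThmem, MemLp.coeFn_toLp NeumannAux.fct_mem]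
          with a ha hb
        rw [RCLike.inner_apply', starRingEnd_apply, star_trivial, ha, hb]
      rw [h1, NeumannAux.integral_volMeasure]
      exact NeumannAux.key_integral h hC hsupp hder1
    -- inner with difference
    have hinner : inner ℝ (gL - fL) fL = -(‖fL‖ ^ 2) := by
      rw [inner_sub_left, hortho, real_inner_self_eq_norm_sq, zero_sub]
    have hnorm : ‖fL‖ ≤ ‖gL - fL‖ := by
      have hCS := abs_real_inner_le_norm (gL - fL) fL
      rw [hinner, abs_neg, abs_of_nonneg (sq_nonneg _)] at hCS
      nlinarith
    -- conclude on eLpNorm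
    have hdiff : (⇑(gL - fL) : ℝ → ℝ) =ᵐ[volMeasure] (fun x : ℝ =>
        ((-(x ^ 2 * deriv (fun y : ℝ => y ^ 2 * deriv h y) x) + h x)
          - NeumannAux.fct x)) := by
      filter_upwards [Lp.coeFn_sub gL fL, MemLp.coeFn_toLp hThmem,
        MemLp.coeFn_toLp NeumannAux.fct_mem] with x h1 h2 h3
      rw [h1, Pi.sub_apply, h2, h3]
    have heq : eLpNorm (fun x : ℝ =>
        ((-(x ^ 2 * deriv (fun y : ℝ => y ^ 2 * deriv h y) x) + h x)
          - NeumannAux.fct x)) 2 volMeasure = ENNReal.ofReal ‖gL - fL‖ := by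
      rw [← eLpNorm_congr_ae hdiff, Lp.norm_def,
        ENNReal.ofReal_toReal (Lp.eLpNorm_ne_top _)]
    rw [heq]
    exact ENNReal.ofReal_le_ofReal hnorm
end
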